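/- arXiv:1309.3940 — 4 statements merged into one kernel-verified Lean document; each statement's English description precedes it below -/
import Mathlib

section
/- Let K be a field complete with respect to a nonarchimedean absolute value, with valuation ring K° = {λ ∈ K : |λ| ≤ 1}. Let (U, ‖·‖) be a finite-dimensional seminormed K-vector space and let N be a finitely generated K°-submodule of U° = {x ∈ U : ‖x‖ ≤ 1} that spans U over K. Define ‖0‖_N = 0 and, for x ∈ U \ {0}, ‖x‖_N = inf{ |λ|⁻¹ : λ ∈ K^×, λ·x ∈ N }. Then: (1) ‖·‖_N is a norm on U; (2) for every K°-basis (e_1, …, e_d) of N and all λ_1, …, λ_d ∈ K one has ‖Σᵢ λᵢ eᵢ‖_N = maxᵢ |λᵢ| and ‖Σᵢ λᵢ eᵢ‖ ≤ maxᵢ |λᵢ|; in particular ‖x‖ ≤ ‖x‖_N for every x ∈ U. -/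
/-!
Since `N` is a `K°`-submodule spanning `U`, every vector has a nonzero multiple in `N`, so the
infimum defining `‖·‖_N` is taken over a nonempty set; homogeneity and the ultrametric inequality
then follow by rescaling elements of `N` by scalars of norm at most `1`. Any `K`-valued linear
form is bounded on the finitely generated `N`, hence `‖φ x‖` is at most a constant times `‖x‖_N`,
which gives definiteness; the same argument applied to `p`, bounded by `1` on `N`, gives
`p ≤ ‖·‖_N`. For a `K°`-basis `e`, uniqueness of coordinates forces `e` to be `K`-linearly
independent, so `μ • ∑ λᵢ eᵢ ∈ N` exactly when `‖μ λᵢ‖ ≤ 1` for all `i`, and the infimum of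
`‖μ‖⁻¹` over such `μ` is `maxᵢ ‖λᵢ‖`.
-/

noncomputable section

open Classical in
/-- The gauge (semi)norm attached to a subset `N` (a `K°`-lattice) of a `K`-vector space `U`:
`‖x‖_N = inf { ‖λ‖⁻¹ | λ ∈ K^×, λ • x ∈ N }`, with `‖0‖_N = 0`. -/
def gaugeNorm (K : Type*) {U : Type*} [NormedField K] [AddCommGroup U] [Module K U]
    (N : Set U) (x : U) : ℝ :=
  if x = 0 then 0
  else sInf {r : ℝ | ∃ lam : K, lam ≠ 0 ∧ lam • x ∈ N ∧ r = ‖lam‖⁻¹}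

section GaugeNorm

open Finset
open scoped Pointwise

variable {K U : Type*} [NormedField K] [AddCommGroup U] [Module K U] {N : Set U}

variable (K) in
def gaugeSet (N : Set U) (x : U) : Set ℝ :=
  {r : ℝ | ∃ lam : K, lam ≠ 0 ∧ lam • x ∈ N ∧ r = ‖lam‖⁻¹}

lemma nonneg_of_mem_gaugeSet {x : U} {r : ℝ} (hr : r ∈ gaugeSet K N x) : 0 ≤ r := by
  obtain ⟨lam, -, -, rfl⟩ := hr
  positivity

lemma bddBelow_gaugeSet (x : U) : BddBelow (gaugeSet K N x) :=
  ⟨0, fun _ => nonneg_of_mem_gaugeSet⟩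

@[simp]
lemma gaugeNorm_zero : gaugeNorm K N (0 : U) = 0 := if_pos rfl

lemma gaugeNorm_of_ne_zero {x : U} (hx : x ≠ 0) : gaugeNorm K N x = sInf (gaugeSet K N x) :=
  if_neg hx

lemma gaugeNorm_nonneg (x : U) : 0 ≤ gaugeNorm K N x := by
  rcases eq_or_ne x 0 with rfl | hx
  · rw [gaugeNorm_zero]
  · rw [gaugeNorm_of_ne_zero hx]
    exact Real.sInf_nonneg fun _ => nonneg_of_mem_gaugeSet

lemma gaugeNorm_le_norm_inv {x : U} {lam : K} (hlam : lam ≠ 0) (hmem : lam • x ∈ N) :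
    gaugeNorm K N x ≤ ‖lam‖⁻¹ := by
  rcases eq_or_ne x 0 with rfl | hx0
  · rw [gaugeNorm_zero]
    positivity
  · rw [gaugeNorm_of_ne_zero hx0]
    exact csInf_le (bddBelow_gaugeSet x) ⟨lam, hlam, hmem, rfl⟩

lemma exists_smul_mem_of_gaugeNorm_lt {x : U} {c : ℝ} (hx : x ≠ 0)
    (hS : (gaugeSet K N x).Nonempty) (h : gaugeNorm K N x < c) :
    ∃ lam : K, lam ≠ 0 ∧ lam • x ∈ N ∧ ‖lam‖⁻¹ < c := by
  rw [gaugeNorm_of_ne_zero hx] at h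
  obtain ⟨_, ⟨lam, hlam, hmem, rfl⟩, hlt⟩ := exists_lt_of_csInf_lt hS h
  exact ⟨lam, hlam, hmem, hlt⟩

lemma gaugeSet_smul {a : K} (ha : a ≠ 0) (x : U) :
    gaugeSet K N (a • x) = ‖a‖ • gaugeSet K N x := by
  ext r
  simp only [gaugeSet, Set.mem_smul_set, Set.mem_ofPred_eq, smul_eq_mul]
  constructor
  · rintro ⟨μ, hμ, hmem, rfl⟩
    refine ⟨_, ⟨μ * a, mul_ne_zero hμ ha, by rwa [mul_smul], rfl⟩, ?_⟩
    rw [norm_mul]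
    field_simp
  · rintro ⟨_, ⟨ν, hν, hmem, rfl⟩, rfl⟩
    refine ⟨ν * a⁻¹, mul_ne_zero hν (inv_ne_zero ha), by rwa [mul_smul, inv_smul_smul₀ ha], ?_⟩
    rw [norm_mul, norm_inv]
    field_simp

lemma gaugeNorm_smul (a : K) (x : U) : gaugeNorm K N (a • x) = ‖a‖ * gaugeNorm K N x := by
  rcases eq_or_ne a 0 with rfl | ha
  · simp
  rcases eq_or_ne x 0 with rfl | hx
  · simp
  rw [gaugeNorm_of_ne_zero (smul_ne_zero ha hx), gaugeNorm_of_ne_zero hx, gaugeSet_smul ha,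
    Real.sInf_smul_of_nonneg (norm_nonneg a), smul_eq_mul]

lemma smul_mem_of_norm_le (hNsmul : ∀ lam : K, ‖lam‖ ≤ 1 → ∀ x ∈ N, lam • x ∈ N)
    {l m : K} {z : U} (hm : m ≠ 0) (hlm : ‖l‖ ≤ ‖m‖) (hz : m • z ∈ N) : l • z ∈ N := by
  rw [← inv_mul_cancel_right₀ hm l, mul_smul]
  refine hNsmul _ ?_ _ hz
  rw [norm_mul, norm_inv]
  exact mul_inv_le_one_of_le₀ hlm (norm_nonneg m)

lemma exists_smul_add_mem (hNadd : ∀ x ∈ N, ∀ y ∈ N, x + y ∈ N)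
    (hNsmul : ∀ lam : K, ‖lam‖ ≤ 1 → ∀ x ∈ N, lam • x ∈ N) {a b : K} {x y : U}
    (ha : a ≠ 0) (hb : b ≠ 0) (hax : a • x ∈ N) (hby : b • y ∈ N) :
    ∃ c : K, c ≠ 0 ∧ c • (x + y) ∈ N ∧ ‖c‖⁻¹ ≤ max ‖a‖⁻¹ ‖b‖⁻¹ := by
  rcases le_total ‖a‖ ‖b‖ with hab | hba
  · refine ⟨a, ha, ?_, le_max_left _ _⟩
    rw [smul_add]
    exact hNadd _ hax _ (smul_mem_of_norm_le hNsmul hb hab hby)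
  · refine ⟨b, hb, ?_, le_max_right _ _⟩
    rw [smul_add]
    exact hNadd _ (smul_mem_of_norm_le hNsmul ha hba hax) _ hby

lemma gaugeNorm_add_le (hNadd : ∀ x ∈ N, ∀ y ∈ N, x + y ∈ N)
    (hNsmul : ∀ lam : K, ‖lam‖ ≤ 1 → ∀ x ∈ N, lam • x ∈ N) {x y : U}
    (hx : (gaugeSet K N x).Nonempty) (hy : (gaugeSet K N y).Nonempty) :
    gaugeNorm K N (x + y) ≤ max (gaugeNorm K N x) (gaugeNorm K N y) := by
  rcases eq_or_ne x 0 with rfl | hx0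
  · rw [zero_add]
    exact le_max_right _ _
  rcases eq_or_ne y 0 with rfl | hy0
  · rw [add_zero]
    exact le_max_left _ _
  refine le_of_forall_gt_imp_ge_of_dense fun r hr => ?_
  obtain ⟨a, ha, hax, har⟩ :=
    exists_smul_mem_of_gaugeNorm_lt hx0 hx ((le_max_left _ _).trans_lt hr)
  obtain ⟨b, hb, hby, hbr⟩ :=
    exists_smul_mem_of_gaugeNorm_lt hy0 hy ((le_max_right _ _).trans_lt hr)
  obtain ⟨c, hc, hmem, hcab⟩ := exists_smul_add_mem hNadd hNsmul ha hb hax hby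
  exact (gaugeNorm_le_norm_inv hc hmem).trans (hcab.trans (max_lt har hbr).le)

lemma gaugeSet_nonempty_of_mem_span (hN0 : (0 : U) ∈ N)
    (hNadd : ∀ x ∈ N, ∀ y ∈ N, x + y ∈ N)
    (hNsmul : ∀ lam : K, ‖lam‖ ≤ 1 → ∀ x ∈ N, lam • x ∈ N) {x : U}
    (hx : x ∈ Submodule.span K N) : (gaugeSet K N x).Nonempty := by
  suffices ∃ lam : K, lam ≠ 0 ∧ lam • x ∈ N from
    let ⟨lam, hlam, hmem⟩ := this; ⟨_, lam, hlam, hmem, rfl⟩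
  induction hx using Submodule.span_induction with
  | mem x hx => exact ⟨1, one_ne_zero, by rwa [one_smul]⟩
  | zero => exact ⟨1, one_ne_zero, by rwa [smul_zero]⟩
  | add x y _ _ hx hy =>
    obtain ⟨a, ha, hax⟩ := hx
    obtain ⟨b, hb, hby⟩ := hy
    obtain ⟨c, hc, hmem, -⟩ := exists_smul_add_mem hNadd hNsmul ha hb hax hby
    exact ⟨c, hc, hmem⟩
  | smul c x _ hx =>
    obtain ⟨a, ha, hax⟩ := hx
    rcases eq_or_ne c 0 with rfl | hc
    · exact ⟨1, one_ne_zero, by rwa [zero_smul, smul_zero]⟩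
    · exact ⟨a * c⁻¹, mul_ne_zero ha (inv_ne_zero hc), by rwa [mul_smul, inv_smul_smul₀ hc]⟩

lemma le_mul_gaugeNorm (q : U → ℝ) (hq : ∀ (a : K) (x : U), q (a • x) = ‖a‖ * q x)
    {C : ℝ} (hC : 0 ≤ C) (hqN : ∀ n ∈ N, q n ≤ C) {x : U} (hx : (gaugeSet K N x).Nonempty) :
    q x ≤ C * gaugeNorm K N x := by
  rcases eq_or_ne x 0 with rfl | hx0
  · have hq0 : q 0 = 0 := by simpa using hq 0 0
    simp [hq0]
  rw [gaugeNorm_of_ne_zero hx0, ← smul_eq_mul, ← Real.sInf_smul_of_nonneg hC]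
  refine le_csInf hx.smul_set ?_
  rintro _ ⟨_, ⟨lam, hlam, hmem, rfl⟩, rfl⟩
  change q x ≤ C * ‖lam‖⁻¹
  rw [le_mul_inv_iff₀ (norm_pos_iff.2 hlam), mul_comm, ← hq]
  exact hqN _ hmem

lemma norm_dual_apply_le_sum {s : Finset U}
    (hs : ∀ x ∈ N, ∃ c : U → K, (∀ y ∈ s, ‖c y‖ ≤ 1) ∧ x = ∑ y ∈ s, c y • y)
    (φ : Module.Dual K U) {n : U} (hn : n ∈ N) : ‖φ n‖ ≤ ∑ y ∈ s, ‖φ y‖ := by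
  obtain ⟨c, hc, rfl⟩ := hs n hn
  calc ‖φ (∑ y ∈ s, c y • y)‖ = ‖∑ y ∈ s, c y * φ y‖ := by simp
    _ ≤ ∑ y ∈ s, ‖c y * φ y‖ := norm_sum_le _ _
    _ ≤ ∑ y ∈ s, ‖φ y‖ := sum_le_sum fun y hy => by
      rw [norm_mul]
      exact mul_le_of_le_one_left (norm_nonneg _) (hc y hy)

lemma eq_zero_of_gaugeNorm_eq_zero {s : Finset U}
    (hs : ∀ x ∈ N, ∃ c : U → K, (∀ y ∈ s, ‖c y‖ ≤ 1) ∧ x = ∑ y ∈ s, c y • y)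
    {x : U} (hx : (gaugeSet K N x).Nonempty) (h : gaugeNorm K N x = 0) : x = 0 := by
  refine (Module.forall_dual_apply_eq_zero_iff K x).1 fun φ => norm_le_zero_iff.1 ?_
  simpa [h] using le_mul_gaugeNorm (fun v => ‖φ v‖) (by simp) (sum_nonneg fun _ _ => norm_nonneg _)
    (fun _ => norm_dual_apply_le_sum hs φ) hx

section Basis

variable {ι : Type*} [Fintype ι] {e : ι → U}

lemma linearIndependent_of_existsUnique_repr (hN0 : (0 : U) ∈ N)
    (he : ∀ x ∈ N, ∃! c : ι → K, (∀ i, ‖c i‖ ≤ 1) ∧ x = ∑ i, c i • e i) :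
    LinearIndependent K e := by
  refine Fintype.linearIndependent_iff.2 fun g hg => ?_
  by_contra! hne
  obtain ⟨i, hi⟩ := hne
  have : Nonempty ι := ⟨i⟩
  obtain ⟨i₀, hmax⟩ := Finite.exists_max (‖g ·‖)
  have hi₀ : g i₀ ≠ 0 := norm_pos_iff.1 ((norm_pos_iff.2 hi).trans_le (hmax i))
  -- dividing by the largest coordinate gives a second `K°`-representation of `0 ∈ N`
  have hrepr : (fun j => (g i₀)⁻¹ * g j) = 0 := by
    refine (he 0 hN0).unique ⟨fun j => ?_, ?_⟩ ⟨fun _ => by simp, by simp⟩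
    · rw [norm_mul, norm_inv]
      exact inv_mul_le_one_of_le₀ (hmax j) (norm_nonneg _)
    · simp only [mul_smul, ← smul_sum, hg, smul_zero]
  simpa [hi₀] using congrFun hrepr i₀

lemma sum_smul_mem_iff (hN0 : (0 : U) ∈ N) (hNadd : ∀ x ∈ N, ∀ y ∈ N, x + y ∈ N)
    (hNsmul : ∀ lam : K, ‖lam‖ ≤ 1 → ∀ x ∈ N, lam • x ∈ N) (heN : ∀ i, e i ∈ N)
    (he : ∀ x ∈ N, ∃! c : ι → K, (∀ i, ‖c i‖ ≤ 1) ∧ x = ∑ i, c i • e i) (c : ι → K) :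
    ∑ i, c i • e i ∈ N ↔ ∀ i, ‖c i‖ ≤ 1 := by
  constructor
  · intro hmem i
    obtain ⟨c', ⟨hc', hsum⟩, -⟩ := he _ hmem
    rw [Fintype.linearIndependent_iffₛ.1 (linearIndependent_of_existsUnique_repr hN0 he) _ _
      hsum i]
    exact hc' i
  · intro hc
    exact sum_induction _ (· ∈ N) (fun a b ha hb => hNadd a ha b hb) hN0 fun i _ => hNsmul _ (hc i) _ (heN i)

lemma gaugeNorm_sum_smul (hN0 : (0 : U) ∈ N) (hNadd : ∀ x ∈ N, ∀ y ∈ N, x + y ∈ N)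
    (hNsmul : ∀ lam : K, ‖lam‖ ≤ 1 → ∀ x ∈ N, lam • x ∈ N) (heN : ∀ i, e i ∈ N)
    (he : ∀ x ∈ N, ∃! c : ι → K, (∀ i, ‖c i‖ ≤ 1) ∧ x = ∑ i, c i • e i) (lam : ι → K) :
    gaugeNorm K N (∑ i, lam i • e i) = ⨆ i, ‖lam i‖ := by
  rcases eq_or_ne (∑ i, lam i • e i) 0 with h0 | hx
  · have hlam : lam = 0 :=
      funext (Fintype.linearIndependent_iff.1 (linearIndependent_of_existsUnique_repr hN0 he) _ h0)
    simp [hlam]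
  obtain ⟨i, hi⟩ : ∃ i, lam i ≠ 0 := by
    by_contra! h
    simp [h] at hx
  have : Nonempty ι := ⟨i⟩
  obtain ⟨i₀, hmax⟩ := Finite.exists_max (‖lam ·‖)
  have hi₀ : lam i₀ ≠ 0 := norm_pos_iff.1 ((norm_pos_iff.2 hi).trans_le (hmax i))
  have hM : ⨆ i, ‖lam i‖ = ‖lam i₀‖ :=
    le_antisymm (ciSup_le hmax) (le_ciSup (f := (‖lam ·‖)) (Finite.bddAbove_range _) i₀)
  have hsmul_mem (μ : K) : μ • ∑ i, lam i • e i ∈ N ↔ ∀ i, ‖μ * lam i‖ ≤ 1 := by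
    simp only [smul_sum, smul_smul]
    exact sum_smul_mem_iff hN0 hNadd hNsmul heN he _
  rw [hM, gaugeNorm_of_ne_zero hx]
  refine IsLeast.csInf_eq ⟨⟨(lam i₀)⁻¹, inv_ne_zero hi₀, (hsmul_mem _).2 fun j => ?_, by simp⟩, ?_⟩
  · rw [norm_mul, norm_inv]
    exact inv_mul_le_one_of_le₀ (hmax j) (norm_nonneg _)
  · rintro _ ⟨μ, hμ, hmem, rfl⟩
    rw [← mul_one ‖μ‖⁻¹, le_inv_mul_iff₀ (norm_pos_iff.2 hμ), ← norm_mul]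
    exact (hsmul_mem μ).1 hmem i₀

end Basis

end GaugeNorm

theorem gaugeNorm_is_norm_and_basis_formula_general
    {K : Type*} [NormedField K]
    {U : Type*} [AddCommGroup U] [Module K U]
    (p : U → ℝ)
    (hpsmul : ∀ (a : K) (x : U), p (a • x) = ‖a‖ * p x)
    (N : Set U)
    -- `N` is a `K°`-submodule of `U`:
    (hN0 : (0 : U) ∈ N)
    (hNadd : ∀ x ∈ N, ∀ y ∈ N, x + y ∈ N)
    (hNsmul : ∀ lam : K, ‖lam‖ ≤ 1 → ∀ x ∈ N, lam • x ∈ N)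
    -- `N` is contained in the unit ball `U°` of the seminorm `p`:
    (hNunit : ∀ x ∈ N, p x ≤ 1)
    -- `N` is finitely generated over `K° = {λ : K | ‖λ‖ ≤ 1}`:
    (hNfg : ∃ s : Finset U, ↑s ⊆ N ∧ ∀ x ∈ N, ∃ c : U → K,
      (∀ y ∈ s, ‖c y‖ ≤ 1) ∧ x = ∑ y ∈ s, c y • y)
    -- `N` spans `U` over `K`:
    (hNspan : Submodule.span K N = ⊤) :
    -- (1) `‖·‖_N` is a norm on `U`:
    ((∀ x, 0 ≤ gaugeNorm K N x) ∧
      (∀ (a : K) (x : U), gaugeNorm K N (a • x) = ‖a‖ * gaugeNorm K N x) ∧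
      (∀ x y, gaugeNorm K N (x + y) ≤ max (gaugeNorm K N x) (gaugeNorm K N y)) ∧
      (∀ x, gaugeNorm K N x = 0 → x = 0)) ∧
    -- (2) for every `K°`-basis `e : Fin d → U` of `N` and all scalars `lam : Fin d → K`:
    (∀ (d : ℕ) (e : Fin d → U), (∀ i, e i ∈ N) →
      (∀ x ∈ N, ∃! c : Fin d → K, (∀ i, ‖c i‖ ≤ 1) ∧ x = ∑ i, c i • e i) →
      ∀ lam : Fin d → K,
        gaugeNorm K N (∑ i, lam i • e i) = (⨆ i, ‖lam i‖) ∧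
        p (∑ i, lam i • e i) ≤ ⨆ i, ‖lam i‖) ∧
    -- in particular `p ≤ ‖·‖_N`:
    (∀ x, p x ≤ gaugeNorm K N x) := by
  obtain ⟨s, -, hs⟩ := hNfg
  have hS (x : U) : (gaugeSet K N x).Nonempty :=
    gaugeSet_nonempty_of_mem_span hN0 hNadd hNsmul (hNspan ▸ Submodule.mem_top)
  have hp_le (x : U) : p x ≤ gaugeNorm K N x :=
    (le_mul_gaugeNorm p hpsmul zero_le_one hNunit (hS x)).trans_eq (one_mul _)
  refine ⟨⟨gaugeNorm_nonneg, gaugeNorm_smul, fun x y => gaugeNorm_add_le hNadd hNsmul (hS x) (hS y),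
    fun x => eq_zero_of_gaugeNorm_eq_zero hs (hS x)⟩, fun d e heN he lam => ?_, hp_le⟩
  have hformula := gaugeNorm_sum_smul hN0 hNadd hNsmul heN he lam
  exact ⟨hformula, hformula ▸ hp_le _⟩

/-- **Gauge norm of a lattice** (Lemma `lem:gaugenorm`).
Let `K` be a complete nonarchimedean valued field, `(U, p)` a finite-dimensional seminormed
`K`-vector space, and `N` a finitely generated `K°`-submodule of the unit ball
`U° = {x | p x ≤ 1}` spanning `U` over `K`.  Then the gauge `‖·‖_N` is a norm on `U`; moreover
for every `K°`-basis `(e 1, …, e d)` of `N` and all scalars `λ i ∈ K` one has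
`‖∑ λ i • e i‖_N = max ‖λ i‖ ≥ p (∑ λ i • e i)`; in particular `p x ≤ ‖x‖_N` for all `x`. -/
theorem gaugeNorm_is_norm_and_basis_formula
    {K : Type*} [NormedField K] [IsUltrametricDist K] [CompleteSpace K]
    {U : Type*} [AddCommGroup U] [Module K U] [FiniteDimensional K U]
    (p : U → ℝ)
    (hp0 : ∀ x, 0 ≤ p x)
    (hpsmul : ∀ (a : K) (x : U), p (a • x) = ‖a‖ * p x)
    (hpmax : ∀ x y, p (x + y) ≤ max (p x) (p y))
    (N : Set U)
    -- `N` is a `K°`-submodule of `U`: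
    (hN0 : (0 : U) ∈ N)
    (hNadd : ∀ x ∈ N, ∀ y ∈ N, x + y ∈ N)
    (hNsmul : ∀ lam : K, ‖lam‖ ≤ 1 → ∀ x ∈ N, lam • x ∈ N)
    -- `N` is contained in the unit ball `U°` of the seminorm `p`:
    (hNunit : ∀ x ∈ N, p x ≤ 1)
    -- `N` is finitely generated over `K° = {λ : K | ‖λ‖ ≤ 1}`:
    (hNfg : ∃ s : Finset U, ↑s ⊆ N ∧ ∀ x ∈ N, ∃ c : U → K,
      (∀ y ∈ s, ‖c y‖ ≤ 1) ∧ x = ∑ y ∈ s, c y • y)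
    -- `N` spans `U` over `K`:
    (hNspan : Submodule.span K N = ⊤) :
    -- (1) `‖·‖_N` is a norm on `U`:
    ((∀ x, 0 ≤ gaugeNorm K N x) ∧
      (∀ (a : K) (x : U), gaugeNorm K N (a • x) = ‖a‖ * gaugeNorm K N x) ∧
      (∀ x y, gaugeNorm K N (x + y) ≤ max (gaugeNorm K N x) (gaugeNorm K N y)) ∧
      (∀ x, gaugeNorm K N x = 0 → x = 0)) ∧
    -- (2) for every `K°`-basis `e : Fin d → U` of `N` and all scalars `lam : Fin d → K`:
    (∀ (d : ℕ) (e : Fin d → U), (∀ i, e i ∈ N) →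
      (∀ x ∈ N, ∃! c : Fin d → K, (∀ i, ‖c i‖ ≤ 1) ∧ x = ∑ i, c i • e i) →
      ∀ lam : Fin d → K,
        gaugeNorm K N (∑ i, lam i • e i) = (⨆ i, ‖lam i‖) ∧
        p (∑ i, lam i • e i) ≤ ⨆ i, ‖lam i‖) ∧
    -- in particular `p ≤ ‖·‖_N`:
    (∀ x, p x ≤ gaugeNorm K N x) :=
  gaugeNorm_is_norm_and_basis_formula_general p hpsmul N hN0 hNadd hNsmul hNunit hNfg hNspan

end
end

section
/- Let K be a field complete with respect to a nontrivial nonarchimedean absolute value. Let E and F be Fréchet spaces over K and let f : E → F be a continuous K-linear map whose cokernel F/f(E) is a finite-dimensional K-vector space. Then the image f(E) is closed in F, and f is topologically strict, i.e. the induced bijection E/Ker(f) → f(E) (with f(E) carrying the subspace topology) is a homeomorphism. -/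
/-!
The heart of the proof is the open mapping theorem for complete metrizable topological vector
spaces. By Baire's theorem the closure of the image of a neighbourhood of zero under a continuous
linear surjection is a neighbourhood of zero; completeness of the source then removes the closure,
the preimage of a point of that closure being the sum of a series of successive corrections.

Let `W` be a (finite-dimensional, hence complete) algebraic complement of the range of `f`. The
surjection `E × W → F, (e, w) ↦ f e + w` is open, hence a quotient map, so the projection of `F`
onto `W` along the range is continuous and the range, its kernel, is closed. The range is then
complete, and the open mapping theorem applied to the corestriction `E → range f` shows that `f`
is strict.
-/

open Filter Set Topology Function
open scoped Pointwise Uniformity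

theorem Filter.Tendsto.closure_smallSets {ι X : Type*} [TopologicalSpace X] [RegularSpace X]
    {l : Filter ι} {s : ι → Set X} {x : X} (h : Tendsto s l (𝓝 x).smallSets) :
    Tendsto (fun i ↦ closure (s i)) l (𝓝 x).smallSets := by
  rw [(closed_nhds_basis x).smallSets.tendsto_right_iff] at h ⊢
  exact fun t ht ↦ (h t ht).mono fun _ hi ↦ closure_minimal hi ht.2

theorem sub_mem_of_forall_succ_sub_mem {G : Type*} [AddCommGroup G] {v : ℕ → Set G} {p : ℕ → G}
    (hv_add : ∀ n, v (n + 1) + v (n + 1) ⊆ v n) (hv_zero : ∀ n, (0 : G) ∈ v n)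
    (hp : ∀ n, p (n + 1) - p n ∈ v (n + 1)) (m k : ℕ) : p (m + k) - p m ∈ v m := by
  induction k generalizing m with
  | zero => simpa using hv_zero m
  | succ k ih =>
    have hsplit : p (m + (k + 1)) - p m = (p (m + 1) - p m) + (p (m + 1 + k) - p (m + 1)) := by
      rw [Nat.add_right_comm, Nat.add_assoc]; abel
    exact hsplit ▸ hv_add m (add_mem_add (hp m) (ih (m + 1)))

theorem cauchySeq_of_forall_succ_sub_mem {G : Type*} [AddCommGroup G] [UniformSpace G]
    [IsUniformAddGroup G] {v : ℕ → Set G} {p : ℕ → G}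
    (hv_add : ∀ n, v (n + 1) + v (n + 1) ⊆ v n) (hv_zero : ∀ n, (0 : G) ∈ v n)
    (hv_tendsto : Tendsto v atTop (𝓝 0).smallSets) (hp : ∀ n, p (n + 1) - p n ∈ v (n + 1)) :
    CauchySeq p := by
  have hbasis : (𝓤 G).HasBasis (· ∈ 𝓝 (0 : G)) fun W ↦ {x | x.1 - x.2 ∈ W} := by
    rw [uniformity_eq_comap_nhds_zero_swapped]
    exact (𝓝 (0 : G)).basis_sets.comap _
  refine hbasis.cauchySeq_iff'.2 fun W hW ↦ ?_
  obtain ⟨N, hN⟩ := (tendsto_smallSets_iff.1 hv_tendsto W hW).exists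
  refine ⟨N, fun n hn ↦ hN ?_⟩
  obtain ⟨k, rfl⟩ := Nat.exists_eq_add_of_le hn
  exact sub_mem_of_forall_succ_sub_mem hv_add hv_zero hp N k

section TopologicalAddGroup

variable {E F 𝓕 : Type*} [AddCommGroup E] [UniformSpace E] [IsUniformAddGroup E] [CompleteSpace E]
  [AddCommGroup F] [TopologicalSpace F] [IsTopologicalAddGroup F] [T2Space F]
  [FunLike 𝓕 E F] [AddMonoidHomClass 𝓕 E F]

theorem closure_image_subset_image_closure_of_add_subset {f : 𝓕} (hf : Continuous f)
    {v : ℕ → Set E} (hv_add : ∀ n, v (n + 1) + v (n + 1) ⊆ v n) (hv_nhds : ∀ n, v n ∈ 𝓝 0)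
    (hv_tendsto : Tendsto v atTop (𝓝 0).smallSets) (hf_closure : ∀ n, closure (f '' v n) ∈ 𝓝 0) :
    closure (f '' v 1) ⊆ f '' closure (v 0) := by
  intro y hy
  have step : ∀ n e, y - f e ∈ closure (f '' v (n + 1)) →
      ∃ e', e' - e ∈ v (n + 1) ∧ y - f e' ∈ closure (f '' v (n + 2)) := by
    intro n e he
    obtain ⟨_, ⟨x, hx, rfl⟩, hxy⟩ :=
      mem_closure_iff_nhds_zero.1 he _ (neg_mem_nhds_zero F (hf_closure (n + 2)))
    refine ⟨e + x, by simpa using hx, ?_⟩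
    simpa [map_add, sub_add_eq_sub_sub] using hxy
  choose! next hnext using step
  let p : ℕ → E := fun n ↦ Nat.rec 0 (fun n e ↦ next n e) n
  have hp_mem : ∀ n, y - f (p n) ∈ closure (f '' v (n + 1)) := by
    intro n
    induction n with
    | zero => simpa [p] using hy
    | succ n ih => exact (hnext n _ ih).2
  have hp_succ : ∀ n, p (n + 1) - p n ∈ v (n + 1) := fun n ↦ (hnext n _ (hp_mem n)).1
  have hv_zero : ∀ n, (0 : E) ∈ v n := fun n ↦ mem_of_mem_nhds (hv_nhds n)
  obtain ⟨x, hx⟩ := cauchySeq_tendsto_of_complete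
    (cauchySeq_of_forall_succ_sub_mem hv_add hv_zero hv_tendsto hp_succ)
  have hp_zero : p 0 = 0 := rfl
  have hx_mem : x ∈ closure (v 0) := mem_closure_of_tendsto hx <| Eventually.of_forall fun n ↦ by
    simpa [hp_zero] using sub_mem_of_forall_succ_sub_mem hv_add hv_zero hp_succ 0 n
  have himage : Tendsto (fun n ↦ closure (f '' v (n + 1))) atTop (𝓝 0).smallSets :=
    ((tendsto_image_smallSets.2 (map_zero f ▸ hf.tendsto 0)).comp
      (hv_tendsto.comp (tendsto_add_atTop_nat 1))).closure_smallSets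
  have hy_sub : Tendsto (fun n ↦ y - f (p n)) atTop (𝓝 0) :=
    himage.of_smallSets (Eventually.of_forall hp_mem)
  have hy_lim : Tendsto (fun n ↦ f (p n)) atTop (𝓝 y) := by
    simpa using (tendsto_const_nhds (x := y)).sub hy_sub
  exact ⟨x, hx_mem, tendsto_nhds_unique ((hf.tendsto x).comp hx) hy_lim⟩

theorem isOpenMap_of_closure_image_mem_nhds_zero [FirstCountableTopology E] {f : 𝓕}
    (hf : Continuous f) (hf_closure : ∀ U ∈ 𝓝 (0 : E), closure (f '' U) ∈ 𝓝 0) : IsOpenMap f := by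
  refine IsTopologicalAddGroup.isOpenMap_iff_nhds_zero.2 fun S hS ↦ ?_
  obtain ⟨u, hu, hu_add⟩ := IsTopologicalAddGroup.exists_antitone_basis_nhds_zero E
  obtain ⟨N, hN⟩ := hu.mem_iff.1 (mem_map.1 hS)
  have hu_closure : closure (u (N + 1)) ⊆ u N :=
    (closure_subset_add_self_of_mem_nhds_zero (hu.mem _)).trans (hu_add N)
  have hv_tendsto : Tendsto (fun n ↦ u (N + 1 + n)) atTop (𝓝 0).smallSets :=
    hu.tendsto_smallSets.comp (tendsto_atTop_mono (fun n ↦ Nat.le_add_left n _) tendsto_id)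
  have hv_sub : closure (f '' u (N + 1 + 1)) ⊆ f '' closure (u (N + 1 + 0)) :=
    closure_image_subset_image_closure_of_add_subset (v := fun n ↦ u (N + 1 + n)) hf
      (fun n ↦ hu_add _) (fun n ↦ hu.mem _) hv_tendsto (fun n ↦ hf_closure _ (hu.mem _))
  exact mem_of_superset (hf_closure _ (hu.mem _))
    (hv_sub.trans ((image_mono (hu_closure.trans hN)).trans (image_preimage_subset _ _)))

end TopologicalAddGroup

theorem closure_image_mem_nhds_zero_of_surjective {K E F : Type*} [NontriviallyNormedField K]
    [AddCommGroup E] [Module K E] [TopologicalSpace E] [IsTopologicalAddGroup E]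
    [ContinuousSMul K E] [AddCommGroup F] [Module K F] [TopologicalSpace F]
    [IsTopologicalAddGroup F] [ContinuousConstSMul K F] [BaireSpace F]
    (f : E →ₗ[K] F) (hf : Surjective f) {U : Set E} (hU : U ∈ 𝓝 0) :
    closure (f '' U) ∈ 𝓝 0 := by
  obtain ⟨V, hV, hVU⟩ := exists_nhds_half_neg hU
  obtain ⟨c, hc⟩ := NormedField.exists_one_lt_norm K
  have hc_pow : ∀ n : ℕ, c ^ n ≠ 0 := fun n ↦ pow_ne_zero n (norm_pos_iff.1 (one_pos.trans hc))
  have hcover : ⋃ n : ℕ, c ^ n • closure (f '' V) = univ := by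
    refine eq_univ_of_forall fun y ↦ mem_iUnion.2 ?_
    obtain ⟨x, rfl⟩ := hf y
    obtain ⟨r, hr⟩ := absorbs_iff_norm.1 (absorbent_nhds_zero (𝕜 := K) hV x)
    obtain ⟨n, hn⟩ := pow_unbounded_of_one_lt r hc
    obtain ⟨v, hv, rfl⟩ := hr (c ^ n) (by rw [norm_pow]; exact hn.le) rfl
    exact ⟨n, f v, subset_closure (mem_image_of_mem f hv), (map_smul f _ v).symm⟩
  obtain ⟨n, hn⟩ := nonempty_interior_of_iUnion_of_closed
    (fun n ↦ isClosed_closure.smul_of_ne_zero (hc_pow n)) hcover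
  obtain ⟨y, hy⟩ : (interior (closure (f '' V))).Nonempty := by
    rwa [interior_smul₀ (hc_pow n), smul_set_nonempty] at hn
  have hsub : (· - y) '' interior (closure (f '' V)) ⊆ closure (f '' U) := by
    rintro _ ⟨z, hz, rfl⟩
    refine map_mem_closure₂ continuous_sub (interior_subset hz) (interior_subset hy) ?_
    rintro _ ⟨a, ha, rfl⟩ _ ⟨b, hb, rfl⟩
    exact ⟨a - b, hVU a ha b hb, map_sub f a b⟩
  refine mem_of_superset ?_ hsub
  simpa using (isOpenMap_sub_right y).image_mem_nhds (isOpen_interior.mem_nhds hy)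

section OpenMapping

variable {K : Type*} [NontriviallyNormedField K]
  {E : Type*} [AddCommGroup E] [Module K E] [UniformSpace E] [IsUniformAddGroup E]
  [ContinuousSMul K E] [CompleteSpace E] [FirstCountableTopology E]
  {F : Type*} [AddCommGroup F] [Module K F] [UniformSpace F] [IsUniformAddGroup F]
  [ContinuousSMul K F] [CompleteSpace F] [FirstCountableTopology F] [T2Space F]

theorem ContinuousLinearMap.isOpenMap_of_surjective_of_completeSpace (f : E →L[K] F)
    (hf : Surjective f) : IsOpenMap f :=
  have := IsUniformAddGroup.uniformity_countably_generated (α := F)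
  isOpenMap_of_closure_image_mem_nhds_zero f.continuous fun _ hU ↦
    closure_image_mem_nhds_zero_of_surjective (f : E →ₗ[K] F) hf hU

theorem ContinuousLinearMap.isClosed_range_of_finiteDimensional_quotient [CompleteSpace K]
    (f : E →L[K] F) [FiniteDimensional K (F ⧸ f.range)] : IsClosed (f.range : Set F) := by
  obtain ⟨W, hW⟩ := f.range.exists_isCompl
  have : FiniteDimensional K W := (Submodule.quotientEquivOfIsCompl _ W hW).finiteDimensional
  have : IsUniformAddGroup W := W.toAddSubgroup.isUniformAddGroup
  have : FirstCountableTopology W := IsEmbedding.subtypeVal.firstCountableTopology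
  have : CompleteSpace W := (Submodule.complete_of_finiteDimensional W).completeSpace_coe
  let g : E × W →L[K] F := f.coprod W.subtypeL
  have hg_surj : Surjective g := by
    refine LinearMap.range_eq_top.1 (?_ : LinearMap.range (g : E × W →ₗ[K] F) = ⊤)
    simp [g, LinearMap.range_coprod, hW.sup_eq_top]
  have hg : IsOpenQuotientMap g :=
    ⟨hg_surj, g.continuous, g.isOpenMap_of_surjective_of_completeSpace hg_surj⟩
  let P : F →ₗ[K] W := W.projectionOnto f.range hW.symm
  have hP : Continuous P := by
    rw [← hg.continuous_comp_iff]
    convert continuous_snd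
    ext ⟨e, w⟩ : 1
    have hfe : P (f e) = 0 :=
      Submodule.projectionOnto_apply_of_mem_right hW.symm (LinearMap.mem_range_self _ e)
    simp [g, P, hfe]
  have : (f.range : Set F) = P ⁻¹' {0} := by
    ext y
    simp [P, Submodule.projectionOnto_apply_eq_zero_iff]
  exact this ▸ isClosed_singleton.preimage hP

theorem ContinuousLinearMap.isStrictMap_of_isClosed_range (f : E →L[K] F)
    (hf : IsClosed (f.range : Set F)) : IsStrictMap f := by
  have : IsUniformAddGroup f.range := f.range.toAddSubgroup.isUniformAddGroup
  have : FirstCountableTopology f.range := IsEmbedding.subtypeVal.firstCountableTopology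
  have : CompleteSpace f.range := hf.completeSpace_coe
  have hsurj : Surjective f.rangeRestrict := f.toLinearMap.surjective_rangeRestrict
  rw [isStrictMap_iff_isQuotientMap_rangeFactorization, ← f.coe_rangeRestrict]
  exact (f.rangeRestrict.isOpenMap_of_surjective_of_completeSpace hsurj).isQuotientMap
    f.rangeRestrict.continuous hsurj

end OpenMapping

theorem frechet_finite_coker_closed_image_and_strict_general
    {K : Type*} [NontriviallyNormedField K] [CompleteSpace K]
    {E : Type*} [AddCommGroup E] [Module K E] [UniformSpace E] [IsUniformAddGroup E]
    [CompleteSpace E]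
    {F : Type*} [AddCommGroup F] [Module K F] [UniformSpace F] [IsUniformAddGroup F]
    [CompleteSpace F] [T2Space F]
    -- `E` and `F` are Fréchet: their topologies are induced by a countable family of
    -- nonarchimedean seminorms:
    (hE : ∃ q : SeminormFamily K E ℕ,
      (∀ n, ∀ x y, q n (x + y) ≤ max (q n x) (q n y)) ∧ WithSeminorms q)
    (hF : ∃ q : SeminormFamily K F ℕ,
      (∀ n, ∀ x y, q n (x + y) ≤ max (q n x) (q n y)) ∧ WithSeminorms q)
    (f : E →L[K] F)
    (hcoker : FiniteDimensional K (F ⧸ LinearMap.range (f : E →ₗ[K] F))) :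
    IsClosed (LinearMap.range (f : E →ₗ[K] F) : Set F) ∧
      Continuous ⇑(LinearMap.quotKerEquivRange (f : E →ₗ[K] F)) ∧
      Continuous ⇑(LinearMap.quotKerEquivRange (f : E →ₗ[K] F)).symm := by
  obtain ⟨qE, -, hqE⟩ := hE
  obtain ⟨qF, -, hqF⟩ := hF
  have := hqE.continuousSMul
  have := hqF.continuousSMul
  have := hqE.firstCountableTopology
  have := hqF.firstCountableTopology
  have hclosed := f.isClosed_range_of_finiteDimensional_quotient
  have hstrict := LinearMap.isStrictMap_iff_isHomeomorph_quotKerEquivRange.1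
    (f.isStrictMap_of_isClosed_range hclosed)
  exact ⟨hclosed, (Equiv.isHomeomorph_iff (f : E →ₗ[K] F).quotKerEquivRange.toEquiv).1 hstrict⟩

/-- **Open image / topological strictness for Fréchet spaces**
(Proposition `prop:finitecoker`).
Let `K` be a complete nontrivially valued nonarchimedean field, `E`, `F` Fréchet
spaces over `K` (Hausdorff, complete topological `K`-vector spaces whose topology is
induced by a countable family of nonarchimedean seminorms), and `f : E → F` a
continuous `K`-linear map whose cokernel `F ⧸ Im f` is finite-dimensional.  Then the
image of `f` is closed in `F` and `f` is topologically strict, i.e. the induced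
bijection `E ⧸ Ker f → Im f` is a homeomorphism. -/
theorem frechet_finite_coker_closed_image_and_strict
    {K : Type*} [NontriviallyNormedField K] [IsUltrametricDist K] [CompleteSpace K]
    {E : Type*} [AddCommGroup E] [Module K E] [UniformSpace E] [IsUniformAddGroup E]
    [CompleteSpace E] [T2Space E]
    {F : Type*} [AddCommGroup F] [Module K F] [UniformSpace F] [IsUniformAddGroup F]
    [CompleteSpace F] [T2Space F]
    -- `E` and `F` are Fréchet: their topologies are induced by a countable family of
    -- nonarchimedean seminorms:
    (hE : ∃ q : SeminormFamily K E ℕ,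
      (∀ n, ∀ x y, q n (x + y) ≤ max (q n x) (q n y)) ∧ WithSeminorms q)
    (hF : ∃ q : SeminormFamily K F ℕ,
      (∀ n, ∀ x y, q n (x + y) ≤ max (q n x) (q n y)) ∧ WithSeminorms q)
    (f : E →L[K] F)
    (hcoker : FiniteDimensional K (F ⧸ LinearMap.range (f : E →ₗ[K] F))) :
    IsClosed (LinearMap.range (f : E →ₗ[K] F) : Set F) ∧
      Continuous ⇑(LinearMap.quotKerEquivRange (f : E →ₗ[K] F)) ∧
      Continuous ⇑(LinearMap.quotKerEquivRange (f : E →ₗ[K] F)).symm :=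
  frechet_finite_coker_closed_image_and_strict_general hE hF f hcoker
end

section
/- Let K be a field complete with respect to a nonarchimedean absolute value, and let L be a field extension of K complete with respect to a nonarchimedean absolute value extending that of K. Fix a nonempty set M and let (U, (u_m)_{m∈M}) be an M-Banachoid space over K; regard L as the M-normoid K-vector space all of whose seminorms equal the absolute value of L. Then the natural map x ↦ x ⊗ 1 from U to U ⊗̂_K L is an isometry: for every m ∈ M and every x ∈ U one has (u_m ⊗ |·|_L)(x ⊗ 1) = u_m(x), where u_m ⊗ |·|_L denotes the projective tensor seminorm on U ⊗_K L (and hence also its extension to the Hausdorff completion U ⊗̂_K L). -/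
open scoped TensorProduct

noncomputable section

section NormoidDefs

variable (K : Type*) [NormedField K] {M : Type*}

/-- A nonarchimedean seminorm on a `K`-vector space. -/
def IsNASeminorm {U : Type*} [AddCommGroup U] [Module K U] (p : U → ℝ) : Prop :=
  (∀ x, 0 ≤ p x) ∧ (∀ (a : K) (x : U), p (a • x) = ‖a‖ * p x) ∧
    ∀ x y, p (x + y) ≤ max (p x) (p y)

/-- A filter is Cauchy with respect to a family of seminorms. -/
def IsCauchyFam {U : Type*} [AddCommGroup U] (u : M → U → ℝ) (F : Filter U) : Prop :=
  F.NeBot ∧ ∀ m, ∀ ε : ℝ, 0 < ε → ∃ S ∈ F, ∀ x ∈ S, ∀ y ∈ S, u m (x - y) < ε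

/-- A filter converges to a point with respect to a family of seminorms. -/
def TendstoFam {U : Type*} [AddCommGroup U] (u : M → U → ℝ) (F : Filter U) (x₀ : U) : Prop :=
  ∀ m, ∀ ε : ℝ, 0 < ε → ∃ S ∈ F, ∀ x ∈ S, u m (x - x₀) < ε

/-- An `M`-Banachoid space over `K`: a `K`-vector space together with a family of
nonarchimedean seminorms for which it is Hausdorff and complete. -/
def IsBanachoid {U : Type*} [AddCommGroup U] [Module K U] (u : M → U → ℝ) : Prop :=
  (∀ m, IsNASeminorm K (u m)) ∧ (∀ x : U, (∀ m, u m x = 0) → x = 0) ∧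
    ∀ F : Filter U, IsCauchyFam u F → ∃ x₀, TendstoFam u F x₀

/-- The projective tensor seminorm
`(p ⊗ q)(z) = inf { maxᵢ p(xᵢ)·q(yᵢ) | z = ∑ᵢ xᵢ ⊗ yᵢ }`. -/
def projTensorSeminorm {A B : Type*} [AddCommGroup A] [Module K A]
    [AddCommGroup B] [Module K B] (p : A → ℝ) (q : B → ℝ) (z : A ⊗[K] B) : ℝ :=
  sInf {r : ℝ | ∃ ℓ : List (A × B),
    z = (ℓ.map fun ab => ab.1 ⊗ₜ[K] ab.2).sum ∧
    r = (ℓ.map fun ab => p ab.1 * q ab.2).foldr max 0}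

/-- The family of projective tensor seminorms `(u_m ⊗ v_m)_{m ∈ M}`. -/
def projTensorFamily {A B : Type*} [AddCommGroup A] [Module K A]
    [AddCommGroup B] [Module K B] (u : M → A → ℝ) (v : M → B → ℝ) :
    M → A ⊗[K] B → ℝ :=
  fun m => projTensorSeminorm K (u m) (v m)

/-- `(W, w, ι)` is (a realization of) the Hausdorff completion of `(T, t)`: `ι` is `K`-linear,
isometric, has dense image, and `(W, w)` is a Hausdorff complete normoid (Banachoid) space. -/
def IsHausdorffCompletion {T W : Type*} [AddCommGroup T] [Module K T]
    [AddCommGroup W] [Module K W] (t : M → T → ℝ) (w : M → W → ℝ) (ι : T → W) : Prop :=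
  (∀ x y : T, ι (x + y) = ι x + ι y) ∧ (∀ (c : K) (x : T), ι (c • x) = c • ι x) ∧
  (∀ m x, w m (ι x) = t m x) ∧
  (∀ (y : W) (s : Finset M) (ε : ℝ), 0 < ε → ∃ x : T, ∀ m ∈ s, w m (y - ι x) < ε) ∧
  IsBanachoid K w

/-- A bounded map between normoid spaces. -/
def IsBoundedMap {A B : Type*} (u : M → A → ℝ) (v : M → B → ℝ) (f : A → B) : Prop :=
  ∀ m, ∃ C : ℝ, ∀ x, v m (f x) ≤ C * u m x

/-- A strict morphism in `Norm_{M,K}`: a contraction inducing an isometry from the coimage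
to the image. -/
def IsStrictMap {A B : Type*} (u : M → A → ℝ) (v : M → B → ℝ) (f : A → B) : Prop :=
  (∀ m x, v m (f x) ≤ u m x) ∧
  ∀ m (y : B), (∃ x, f x = y) → v m y = sInf {r : ℝ | ∃ x, f x = y ∧ r = u m x}

/-- A strict morphism in `Norm^b_{M,K}`: a bounded map such that, up to constants, the
quotient seminorms of the coimage are bounded by the seminorms of the image. -/
def IsStrictMapB {A B : Type*} (u : M → A → ℝ) (v : M → B → ℝ) (f : A → B) : Prop :=
  IsBoundedMap u v f ∧
  ∀ m, ∃ D : ℝ, ∀ y : B, (∃ x, f x = y) →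
    sInf {r : ℝ | ∃ x, f x = y ∧ r = u m x} ≤ D * v m y

/-- The quotient family of seminorms on `V ⧸ p`. -/
def quotFamily {V : Type*} [AddCommGroup V] [Module K V] (v : M → V → ℝ)
    (p : Submodule K V) : M → (V ⧸ p) → ℝ :=
  fun m q => sInf {r : ℝ | ∃ x : V, Submodule.Quotient.mk x = q ∧ r = v m x}

/-- The restricted family of seminorms on a submodule `p ≤ V`. -/
def restrictFamily {V : Type*} [AddCommGroup V] [Module K V] (v : M → V → ℝ)
    (p : Submodule K V) : M → ↥p → ℝ :=
  fun m x => v m (x : V)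

end NormoidDefs

/-!
Given a representation `1 ⊗ x = ∑ aᵢ ⊗ yᵢ`, any `K`-linear `f : L → K` with `f 1 = 1` contracts
it to `x = ∑ f(aᵢ) • yᵢ`, so `u(x) ≤ maxᵢ |f(aᵢ)| u(yᵢ)`. It therefore suffices to find, for
every finite set of `aᵢ` and every `t > 1`, such an `f` with `|f(aᵢ)| ≤ t |aᵢ|`.
If `K` is trivially normed, the open unit ball of `L` is a `K`-subspace missing `1`, and any
functional vanishing on it works. Otherwise `f` is built one vector at a time: finite-dimensional
subspaces `V` are closed because `K` is complete, so a new vector `a ∉ V` has positive distance to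
`V`, and extending `f` by `f(a) := f(v₀)` for a point `v₀ ∈ V` almost realizing that distance
loses only a factor close to `1`, by the ultrametric inequality.
-/

section Ultrametric

variable {K : Type*} [NormedField K] {E : Type*} [NormedAddCommGroup E] [NormedSpace K E]

lemma norm_mul_infDist_le_norm_add_smul {V : Submodule K E} {v : E} (hv : v ∈ V) (c : K) (a : E) :
    ‖c‖ * Metric.infDist a V ≤ ‖v + c • a‖ := by
  rcases eq_or_ne c 0 with rfl | hc
  · simp
  have hmem : -(c⁻¹ • v) ∈ V := V.neg_mem (V.smul_mem c⁻¹ hv)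
  calc ‖c‖ * Metric.infDist a V ≤ ‖c‖ * ‖c⁻¹ • v + a‖ := by
        gcongr
        simpa [dist_eq_norm, add_comm] using Metric.infDist_le_dist_of_mem hmem
    _ = ‖v + c • a‖ := by
        rw [← norm_smul, smul_add, smul_smul, mul_inv_cancel₀ hc, one_smul]

variable [IsUltrametricDist E]

lemma norm_add_smul_le_of_dist_le {V : Submodule K E} {a v₀ v : E} {t : ℝ} (ht : 1 ≤ t)
    (hv₀ : ‖a - v₀‖ ≤ t * Metric.infDist a V) (hv : v ∈ V) (c : K) :
    ‖v + c • v₀‖ ≤ t * ‖v + c • a‖ := by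
  have hsplit : v + c • v₀ = (v + c • a) + -(c • (a - v₀)) := by
    rw [smul_sub]; abel
  have herr : ‖c • (a - v₀)‖ ≤ t * ‖v + c • a‖ := by
    calc ‖c • (a - v₀)‖ ≤ ‖c‖ * (t * Metric.infDist a V) := by
          rw [norm_smul]; gcongr
      _ = t * (‖c‖ * Metric.infDist a V) := by ring
      _ ≤ t * ‖v + c • a‖ := by gcongr; exact norm_mul_infDist_le_norm_add_smul hv c a
  rw [hsplit]
  refine (IsUltrametricDist.norm_add_le_max _ _).trans (max_le ?_ ?_)
  · exact le_mul_of_one_le_left (norm_nonneg _) ht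
  · rwa [norm_neg]

lemma LinearMap.exists_extend_sup_span_singleton_norm_le {V : Submodule K E}
    (hV : IsClosed (V : Set E)) {a : E} (ha : a ∉ V) (f : E →ₗ[K] K) {C t : ℝ} (hC : 0 ≤ C)
    (ht : 1 < t) (hf : ∀ v ∈ V, ‖f v‖ ≤ C * ‖v‖) :
    ∃ g : E →ₗ[K] K, (∀ v ∈ V, g v = f v) ∧ ∀ w ∈ V ⊔ K ∙ a, ‖g w‖ ≤ t * C * ‖w‖ := by
  have hd : 0 < Metric.infDist a V := (hV.notMem_iff_infDist_pos ⟨0, V.zero_mem⟩).1 ha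
  obtain ⟨v₀, hv₀V, hv₀⟩ := (Metric.infDist_lt_iff ⟨0, V.zero_mem⟩).1
    (lt_mul_of_one_lt_left hd ht)
  obtain ⟨g, hgV, hga⟩ := LinearMap.exists_extend_of_notMem (f.comp V.subtype) ha (f v₀)
  have hgV' : ∀ v ∈ V, g v = f v := fun v hv => LinearMap.congr_fun hgV ⟨v, hv⟩
  refine ⟨g, hgV', fun w hw => ?_⟩
  obtain ⟨v, hv, _, hz, rfl⟩ := Submodule.mem_sup.1 hw
  obtain ⟨c, rfl⟩ := Submodule.mem_span_singleton.1 hz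
  have hval : g (v + c • a) = f (v + c • v₀) := by simp [hgV' v hv, hga]
  calc ‖g (v + c • a)‖ = ‖f (v + c • v₀)‖ := by rw [hval]
    _ ≤ C * ‖v + c • v₀‖ := hf _ (V.add_mem hv (V.smul_mem c hv₀V))
    _ ≤ C * (t * ‖v + c • a‖) := by
        gcongr
        exact norm_add_smul_le_of_dist_le ht.le (by rw [← dist_eq_norm]; exact hv₀.le) hv c
    _ = t * C * ‖v + c • a‖ := by ring

end Ultrametric

lemma exists_linearMap_apply_eq_one_norm_le_of_finite {K : Type*} [NontriviallyNormedField K]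
    [CompleteSpace K] {E : Type*} [NormedAddCommGroup E] [NormedSpace K E] [IsUltrametricDist E]
    {e : E} (he : ‖e‖ = 1) {s : Set E} (hs : s.Finite) {t : ℝ} (ht : 1 < t) :
    ∃ f : E →ₗ[K] K, f e = 1 ∧ ∀ w ∈ Submodule.span K (insert e s), ‖f w‖ ≤ t * ‖w‖ := by
  induction s, hs using Set.Finite.induction_on generalizing t with
  | empty =>
    have he0 : e ∉ (⊥ : Submodule K E) := by simp [← norm_ne_zero_iff, he]
    obtain ⟨f, -, hfe⟩ := LinearMap.exists_extend_of_notMem (0 : _ →ₗ[K] K) he0 1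
    refine ⟨f, hfe, fun w hw => ?_⟩
    obtain ⟨c, rfl⟩ := Submodule.mem_span_singleton.1 (by simpa using hw)
    simp only [map_smul, hfe, smul_eq_mul, mul_one, norm_smul, he]
    exact le_mul_of_one_le_left (norm_nonneg c) ht.le
  | @insert a s _ hs ih =>
    set V := Submodule.span K (insert e s)
    have hspan : Submodule.span K (insert e (insert a s)) = V ⊔ K ∙ a := by
      rw [Set.insert_comm, Submodule.span_insert, sup_comm]
    rw [hspan]
    by_cases ha : a ∈ V
    · rw [sup_eq_left.2 ((Submodule.span_singleton_le_iff_mem a V).2 ha)]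
      exact ih ht
    have ht' : 1 < √t := Real.lt_sqrt_of_sq_lt (by simpa using ht)
    obtain ⟨f, hfe, hf⟩ := ih ht'
    have : FiniteDimensional K V := FiniteDimensional.span_of_finite K (hs.insert e)
    obtain ⟨g, hgV, hg⟩ := f.exists_extend_sup_span_singleton_norm_le
      V.closed_of_finiteDimensional ha (by positivity) ht' hf
    refine ⟨g, (hgV e (Submodule.subset_span (Set.mem_insert e s))).trans hfe, fun w hw => ?_⟩
    simpa [Real.mul_self_sqrt (by positivity : (0 : ℝ) ≤ t)] using hg w hw

lemma exists_linearMap_apply_eq_one_norm_le_of_norm_le_one {K : Type*} [NormedField K]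
    {E : Type*} [NormedAddCommGroup E] [NormedSpace K E] [IsUltrametricDist E]
    (hK : ∀ c : K, ‖c‖ ≤ 1) {e : E} (he : ‖e‖ = 1) :
    ∃ f : E →ₗ[K] K, f e = 1 ∧ ∀ w, ‖f w‖ ≤ ‖w‖ := by
  let B : Submodule K E :=
    { carrier := Metric.ball 0 1
      add_mem' := (IsUltrametricDist.ball_openAddSubgroup E one_pos).add_mem
      zero_mem' := Metric.mem_ball_self one_pos
      smul_mem' := fun c x hx => by
        simp only [mem_ball_zero_iff, norm_smul] at hx ⊢
        exact (mul_le_of_le_one_left (norm_nonneg x) (hK c)).trans_lt hx }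
  have heB : e ∉ B := by
    change e ∉ Metric.ball (0 : E) 1
    simp [he]
  obtain ⟨f, hfB, hfe⟩ := LinearMap.exists_extend_of_notMem (0 : _ →ₗ[K] K) heB 1
  refine ⟨f, hfe, fun w => ?_⟩
  by_cases hw : w ∈ B
  · rw [show f w = 0 by simpa using LinearMap.congr_fun hfB ⟨w, hw⟩, norm_zero]
    exact norm_nonneg w
  · have hw1 : 1 ≤ ‖w‖ := by simpa using (show w ∉ Metric.ball (0 : E) 1 from hw)
    exact (hK _).trans hw1

lemma exists_linearMap_apply_eq_one_norm_le {K : Type*} [NormedField K] [CompleteSpace K]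
    {E : Type*} [NormedAddCommGroup E] [NormedSpace K E] [IsUltrametricDist E]
    {e : E} (he : ‖e‖ = 1) {s : Set E} (hs : s.Finite) {t : ℝ} (ht : 1 < t) :
    ∃ f : E →ₗ[K] K, f e = 1 ∧ ∀ a ∈ s, ‖f a‖ ≤ t * ‖a‖ := by
  by_cases hK : ∃ c : K, 1 < ‖c‖
  · let : NontriviallyNormedField K := { ‹NormedField K› with non_trivial := hK }
    obtain ⟨f, hfe, hf⟩ := exists_linearMap_apply_eq_one_norm_le_of_finite (K := K) he hs ht
    exact ⟨f, hfe, fun a ha => hf a (Submodule.subset_span (Set.mem_insert_of_mem e ha))⟩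
  · simp only [not_exists, not_lt] at hK
    obtain ⟨f, hfe, hf⟩ := exists_linearMap_apply_eq_one_norm_le_of_norm_le_one hK he
    exact ⟨f, hfe, fun a _ => (hf a).trans (le_mul_of_one_le_left (norm_nonneg a) ht.le)⟩

lemma List.foldr_max_le_iff {α : Type*} [LinearOrder α] {l : List α} {b c : α} :
    l.foldr max b ≤ c ↔ b ≤ c ∧ ∀ x ∈ l, x ≤ c := by
  induction l with
  | nil => simp
  | cons x l ih => simp [ih, and_left_comm]

lemma IsNASeminorm.map_zero {K : Type*} [NormedField K] {U : Type*} [AddCommGroup U]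
    [Module K U] {p : U → ℝ} (hp : IsNASeminorm K p) : p 0 = 0 := by
  simpa using hp.2.1 0 0

section ProjTensor

variable {K : Type*} [NormedField K] {A B : Type*} [AddCommGroup A] [Module K A]
  [AddCommGroup B] [Module K B]

lemma projTensorSeminorm_tmul_le (p : A → ℝ) (q : B → ℝ) (a : A) (b : B) (h : 0 ≤ p a * q b) :
    projTensorSeminorm K p q (a ⊗ₜ[K] b) ≤ p a * q b :=
  csInf_le ⟨0, by rintro _ ⟨ℓ, -, rfl⟩; exact (List.foldr_max_le_iff.1 le_rfl).1⟩
    ⟨[(a, b)], by simp, by simp [h]⟩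

lemma IsNASeminorm.apply_lid_rTensor_sum_le {p : B → ℝ} (hp : IsNASeminorm K p) (q : A → ℝ)
    (f : A →ₗ[K] K) (ℓ : List (A × B)) {t : ℝ} (ht : 0 ≤ t)
    (hf : ∀ ab ∈ ℓ, ‖f ab.1‖ ≤ t * q ab.1) :
    p (TensorProduct.lid K B (f.rTensor B (ℓ.map fun ab => ab.1 ⊗ₜ[K] ab.2).sum)) ≤
      (ℓ.map fun ab => q ab.1 * p ab.2).foldr max 0 * t := by
  set r := (ℓ.map fun ab => q ab.1 * p ab.2).foldr max 0
  have hcontract : TensorProduct.lid K B (f.rTensor B (ℓ.map fun ab => ab.1 ⊗ₜ[K] ab.2).sum) =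
      (ℓ.map fun ab => f ab.1 • ab.2).sum := by
    simp [map_list_sum, List.map_map, Function.comp_def]
  rw [hcontract]
  refine (List.sum_le_foldr_max p hp.map_zero.le hp.2.2 _).trans ?_
  refine List.foldr_max_le_iff.2 ⟨?_, ?_⟩
  · exact mul_nonneg (List.foldr_max_le_iff.1 le_rfl).1 ht
  simp only [List.map_map, List.mem_map, Function.comp_apply, forall_exists_index, and_imp]
  rintro _ ab hab rfl
  have hterm : q ab.1 * p ab.2 ≤ r := List.le_max_of_le' 0 (List.mem_map_of_mem hab) le_rfl
  calc p (f ab.1 • ab.2) = ‖f ab.1‖ * p ab.2 := hp.2.1 _ _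
    _ ≤ t * q ab.1 * p ab.2 := by gcongr; exacts [hp.1 _, hf ab hab]
    _ ≤ r * t := by nlinarith [hp.1 ab.2]

end ProjTensor

theorem tensor_with_complete_extension_isometry_general
    {K : Type*} [NormedField K] [CompleteSpace K]
    {L : Type*} [NormedField L] [IsUltrametricDist L]
    [Algebra K L] (hKL : ∀ c : K, ‖algebraMap K L c‖ = ‖c‖)
    {M : Type*}
    {U : Type*} [AddCommGroup U] [Module K U]
    (u : M → U → ℝ) (hU : IsBanachoid K u) :
    ∀ (m : M) (x : U),
      projTensorSeminorm K (fun a : L => ‖a‖) (u m) ((1 : L) ⊗ₜ[K] x) = u m x := by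
  intro m x
  have hu := hU.1 m
  let : NormedSpace K L := ⟨fun c a => by rw [Algebra.smul_def, norm_mul, hKL]⟩
  refine le_antisymm ?_ (le_csInf ⟨u m x, [(1, x)], by simp, by simp [hu.1 x]⟩ ?_)
  · simpa using
      projTensorSeminorm_tmul_le (K := K) (fun a : L => ‖a‖) (u m) 1 x (by simp [hu.1 x])
  rintro _ ⟨ℓ, hℓ, rfl⟩
  refine (le_iff_forall_one_lt_le_mul₀ (List.foldr_max_le_iff.1 le_rfl).1).2 fun t ht => ?_
  obtain ⟨f, hf1, hf⟩ := exists_linearMap_apply_eq_one_norm_le (K := K) norm_one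
    (ℓ.map Prod.fst).finite_toSet ht
  calc u m x = u m (TensorProduct.lid K U (f.rTensor U ((1 : L) ⊗ₜ[K] x))) := by simp [hf1]
    _ ≤ _ := by
      rw [hℓ]
      exact hu.apply_lid_rTensor_sum_le _ f ℓ (by linarith)
        fun ab hab => hf _ (List.mem_map_of_mem hab)

/-- **The canonical map to a complete scalar extension is an isometry**
(Proposition `prop:hoKL`, tensor-seminorm form).
Let `K` be a complete nonarchimedean valued field and `L` a complete nonarchimedean valued
extension of `K`.  For every `M`-Banachoid space `(U, (u_m))` over `K`, the natural map
`x ↦ 1 ⊗ x` from `U` to `L ⊗_K U` is an isometry for the projective tensor seminorms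
`u_m ⊗ |·|_L` (and hence also for their extensions to the Hausdorff completion
`U ⊗̂_K L`). -/
theorem tensor_with_complete_extension_isometry
    {K : Type*} [NormedField K] [IsUltrametricDist K] [CompleteSpace K]
    {L : Type*} [NormedField L] [IsUltrametricDist L] [CompleteSpace L]
    [Algebra K L] (hKL : ∀ c : K, ‖algebraMap K L c‖ = ‖c‖)
    {M : Type*} [Nonempty M]
    {U : Type*} [AddCommGroup U] [Module K U]
    (u : M → U → ℝ) (hU : IsBanachoid K u) :
    ∀ (m : M) (x : U),
      projTensorSeminorm K (fun a : L => ‖a‖) (u m) ((1 : L) ⊗ₜ[K] x) = u m x :=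
  tensor_with_complete_extension_isometry_general hKL u hU
end
end

section
/- Let K be a field complete with respect to a nontrivial nonarchimedean absolute value. Fix a nonempty set M, let (U, (u_m)_{m∈M}) and (V, (v_m)_{m∈M}) be M-normoid spaces over K, each endowed with the topology induced by its family of seminorms, and let f : U → V be a continuous K-linear map. Then there exists a family u' = (u'_m)_{m∈M} of seminorms on U, equivalent to (u_m)_{m∈M}, such that v_m(f(x)) ≤ u'_m(x) for every m ∈ M and every x ∈ U (i.e. f : (U,u') → (V,v) is a contraction). -/
noncomputable section

section FamilyEquiv

variable {K : Type*} [NormedField K] {E : Type*} [AddCommGroup E] [Module K E]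

/-- A family of seminorms `u` is finer than a family `u'` if each `u m` is bounded by a
constant multiple of a maximum of finitely many members of `u'`. -/
def FamilyFiner {M N : Type*} (u : SeminormFamily K E M) (u' : SeminormFamily K E N) : Prop :=
  ∀ m, ∃ (s : Finset N) (hs : s.Nonempty) (C : ℝ), ∀ x, u m x ≤ C * s.sup' hs fun n => u' n x

/-- Two families of seminorms are equivalent if each is finer than the other. -/
def FamilyEquiv {M N : Type*} (u : SeminormFamily K E M) (u' : SeminormFamily K E N) : Prop :=
  FamilyFiner u u' ∧ FamilyFiner u' u

end FamilyEquiv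

/-- **Continuous maps become contractions after an equivalent change of seminorms**
(Lemma `lem:boundedcontinuous`).
Let `K` be a complete nontrivially valued nonarchimedean field, `(U, (u_m)_{m ∈ M})` and
`(V, (v_m)_{m ∈ M})` `M`-normoid spaces over `K` (with the topologies induced by their
families of nonarchimedean seminorms), and `f : U → V` a continuous `K`-linear map.  Then
there is a family of nonarchimedean seminorms `u'` on `U`, equivalent to `u`, such that
`f : (U, u') → (V, v)` is a contraction. -/
theorem continuous_linear_map_contraction_after_equiv_family
    {K : Type*} [NontriviallyNormedField K] [IsUltrametricDist K] [CompleteSpace K]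
    {M : Type*} [Nonempty M]
    {U : Type*} [AddCommGroup U] [Module K U] [TopologicalSpace U]
    {V : Type*} [AddCommGroup V] [Module K V] [TopologicalSpace V]
    (u : SeminormFamily K U M) (hu_na : ∀ m, IsNonarchimedean ⇑(u m))
    (hu : WithSeminorms u)
    (v : SeminormFamily K V M) (hv_na : ∀ m, IsNonarchimedean ⇑(v m))
    (hv : WithSeminorms v)
    (f : U →ₗ[K] V) (hf : Continuous ⇑f) :
    ∃ u' : SeminormFamily K U M,
      (∀ m, IsNonarchimedean ⇑(u' m)) ∧
      FamilyEquiv u u' ∧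
      ∀ (m : M) (x : U), v m (f x) ≤ u' m x := by
  classical
  have hcont : ∀ m, Continuous ⇑((v m).comp f) := by
    intro m
    rw [Seminorm.coe_comp]
    exact (hv.continuous_seminorm m).comp hf
  choose s C hC hbound using fun m =>
    Seminorm.bound_of_continuous hu ((v m).comp f) (hcont m)
  refine ⟨fun m => u m ⊔ (v m).comp f, ?_, ⟨?_, ?_⟩, ?_⟩
  · intro m x y
    simp only [Seminorm.sup_apply, Seminorm.comp_apply, map_add]
    calc max ((u m) (x + y)) ((v m) (f x + f y))
        ≤ max (max ((u m) x) ((u m) y)) (max ((v m) (f x)) ((v m) (f y))) :=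
          max_le_max (hu_na m x y) (hv_na m (f x) (f y))
      _ = max (max ((u m) x) ((v m) (f x))) (max ((u m) y) ((v m) (f y))) :=
          max_max_max_comm _ _ _ _
  · intro m
    refine ⟨{m}, Finset.singleton_nonempty m, 1, fun x => ?_⟩
    rw [one_mul, Finset.sup'_singleton]
    exact le_max_left _ _
  · intro m
    refine ⟨insert m (s m), Finset.insert_nonempty _ _, max (C m : ℝ) 1, fun x => ?_⟩
    set S := (insert m (s m)).sup' (Finset.insert_nonempty _ _) fun n => u n x with hS
    have humS : u m x ≤ S := Finset.le_sup' (fun n => u n x) (Finset.mem_insert_self m (s m))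
    have hS0 : 0 ≤ S := le_trans (apply_nonneg _ _) humS
    have hCS : max (C m : ℝ) 1 * S ≥ S := by
      nlinarith [le_max_right (C m : ℝ) 1]
    rw [Seminorm.sup_apply]
    refine max_le (humS.trans hCS) ?_
    have h1 : ((v m).comp f) x ≤ (C m : ℝ) * ((s m).sup u) x := by
      have := hbound m x
      simpa [NNReal.smul_def] using this
    have h2 : ((s m).sup u) x ≤ S :=
      Seminorm.finset_sup_apply_le hS0 fun i hi =>
        Finset.le_sup' (fun n => u n x) (Finset.mem_insert_of_mem hi)
    calc ((v m).comp f) x ≤ (C m : ℝ) * ((s m).sup u) x := h1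
      _ ≤ max (C m : ℝ) 1 * S :=
        mul_le_mul (le_max_left _ _) h2 (apply_nonneg _ _)
          (le_trans (C m).coe_nonneg (le_max_left _ _))
  · intro m x
    rw [Seminorm.sup_apply]
    exact le_max_right _ _

end
end
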